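/- (Temporal scaling bounds.) For every p ∈ [1,∞) and every λ > 0, Mod_{p,σ}(Γ̌) / φ(λM)^p ≤ Mod^λ_{p,σ}(Γ) ≤ Mod_{p,σ}(Γ̌). Moreover, for p = ∞ (where the energy is E_{∞,σ}(ρ) = max_{e∈E} σ(e)ρ(e)), Mod_{∞,σ}(Γ̌) / φ(λM) ≤ Mod^λ_{∞,σ}(Γ) ≤ Mod_{∞,σ}(Γ̌). -/

import Mathlib

/-! Penalization multiplies each used entry of `Ň` by a factor in `[1, φ(λM)]`, so
`Ň ≤ N_λ ≤ φ(λM) Ň` entrywise. Modulus is antitone in the usage matrix, and scaling the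
usage matrix by `c` scales every admissible density by `1/c`, hence the modulus by `1/c^p`
(by `1/c` for `p = ∞`). -/

open Finset

open scoped Pointwise

noncomputable section

/-- A density `ρ` is admissible for the usage matrix `N` if it is nonnegative and
every object has `ρ`-length at least 1. -/
def IsAdmissible {E Γ : Type*} [Fintype E] (N : Γ → E → ℝ) (ρ : E → ℝ) : Prop :=
  (∀ e, 0 ≤ ρ e) ∧ ∀ γ : Γ, 1 ≤ ∑ e, N γ e * ρ e

/-- The `p`-energy of a density. -/
def pEnergy {E : Type*} [Fintype E] (σ : E → ℝ) (p : ℝ) (ρ : E → ℝ) : ℝ :=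
  ∑ e, σ e * ρ e ^ p

/-- The `p`-modulus: the infimum of the `p`-energy over admissible densities. -/
def pModulus {E Γ : Type*} [Fintype E] (N : Γ → E → ℝ) (σ : E → ℝ) (p : ℝ) : ℝ :=
  sInf {x | ∃ ρ : E → ℝ, IsAdmissible N ρ ∧ x = pEnergy σ p ρ}

/-- The `∞`-energy of a density. -/
def infEnergy {E : Type*} [Fintype E] [Nonempty E] (σ : E → ℝ) (ρ : E → ℝ) : ℝ :=
  Finset.univ.sup' Finset.univ_nonempty (fun e => σ e * ρ e)

/-- The `∞`-modulus: the infimum of the `∞`-energy over admissible densities. -/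
def infModulus {E Γ : Type*} [Fintype E] [Nonempty E] (N : Γ → E → ℝ) (σ : E → ℝ) : ℝ :=
  sInf {x | ∃ ρ : E → ℝ, IsAdmissible N ρ ∧ x = infEnergy σ ρ}

section Modulus

variable {E Γ : Type*} [Fintype E] {N N' : Γ → E → ℝ} {ρ : E → ℝ}

theorem IsAdmissible.mono (hNN' : ∀ γ e, N γ e ≤ N' γ e) (hρ : IsAdmissible N ρ) :
    IsAdmissible N' ρ :=
  ⟨hρ.1, fun γ => (hρ.2 γ).trans <|
    sum_le_sum fun e _ => mul_le_mul_of_nonneg_right (hNN' γ e) (hρ.1 e)⟩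

theorem isAdmissible_const_mul_iff {c : ℝ} (hc : 0 < c) :
    IsAdmissible (fun γ e => c * N γ e) ρ ↔ IsAdmissible N (fun e => c * ρ e) := by
  have hsum : ∀ γ, ∑ e, c * N γ e * ρ e = ∑ e, N γ e * (c * ρ e) :=
    fun γ => sum_congr rfl fun e _ => by ring
  simp only [IsAdmissible, hsum, mul_nonneg_iff_of_pos_left hc]

theorem exists_isAdmissible (hN : ∀ γ e, 0 ≤ N γ e) (hrow : ∀ γ, ∃ e, 1 ≤ N γ e) :
    ∃ ρ, IsAdmissible N ρ := by
  refine ⟨fun _ => 1, fun _ => zero_le_one, fun γ => ?_⟩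
  obtain ⟨e, he⟩ := hrow γ
  calc (1 : ℝ) ≤ N γ e * 1 := by rwa [mul_one]
    _ ≤ ∑ e', N γ e' * 1 :=
      single_le_sum (fun e' _ => mul_nonneg (hN γ e') zero_le_one) (mem_univ e)

def modulus (N : Γ → E → ℝ) (En : (E → ℝ) → ℝ) : ℝ :=
  sInf {x | ∃ ρ : E → ℝ, IsAdmissible N ρ ∧ x = En ρ}

theorem modulus_anti {En : (E → ℝ) → ℝ} (hEn : ∀ ρ, (∀ e, 0 ≤ ρ e) → 0 ≤ En ρ)
    (hNN' : ∀ γ e, N γ e ≤ N' γ e) (hN : ∃ ρ, IsAdmissible N ρ) :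
    modulus N' En ≤ modulus N En := by
  obtain ⟨ρ, hρ⟩ := hN
  refine csInf_le_csInf ?_ ⟨En ρ, ρ, hρ, rfl⟩ ?_
  · exact ⟨0, by rintro _ ⟨ρ', hρ', rfl⟩; exact hEn ρ' hρ'.1⟩
  · rintro _ ⟨ρ', hρ', rfl⟩
    exact ⟨ρ', hρ'.mono hNN', rfl⟩

theorem modulus_const_mul {En : (E → ℝ) → ℝ} {c k : ℝ} (hc : 0 < c) (hk : 0 < k)
    (hEn : ∀ ρ, (∀ e, 0 ≤ ρ e) → En (fun e => c * ρ e) = k * En ρ) :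
    modulus (fun γ e => c * N γ e) En = modulus N En / k := by
  have hset : {x | ∃ ρ, IsAdmissible (fun γ e => c * N γ e) ρ ∧ x = En ρ} =
      k⁻¹ • {x | ∃ ρ, IsAdmissible N ρ ∧ x = En ρ} := by
    ext x
    simp only [Set.mem_smul_set, Set.mem_ofPred_eq, smul_eq_mul, isAdmissible_const_mul_iff hc]
    constructor
    · rintro ⟨ρ, hρ, rfl⟩
      refine ⟨_, ⟨_, hρ, rfl⟩, ?_⟩
      rw [hEn ρ ((isAdmissible_const_mul_iff hc).2 hρ).1, inv_mul_cancel_left₀ hk.ne']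
    · rintro ⟨_, ⟨ρ, hρ, rfl⟩, rfl⟩
      have hscale : (fun e => c * (c⁻¹ * ρ e)) = ρ :=
        funext fun e => mul_inv_cancel_left₀ hc.ne' (ρ e)
      have hnonneg : ∀ e, 0 ≤ c⁻¹ * ρ e := fun e => mul_nonneg (inv_nonneg.2 hc.le) (hρ.1 e)
      refine ⟨fun e => c⁻¹ * ρ e, by rwa [hscale], ?_⟩
      have h := hEn _ hnonneg
      rw [hscale] at h
      rw [h, inv_mul_cancel_left₀ hk.ne']
  rw [modulus, hset, Real.sInf_smul_of_nonneg (inv_nonneg.2 hk.le), smul_eq_mul,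
    inv_mul_eq_div, modulus]

theorem modulus_weighted_bounds {En : (E → ℝ) → ℝ} {w : Γ → E → ℝ} {c k : ℝ}
    (hk : 0 < k) (hEn_nonneg : ∀ ρ, (∀ e, 0 ≤ ρ e) → 0 ≤ En ρ)
    (hEn_const_mul : ∀ ρ, (∀ e, 0 ≤ ρ e) → En (fun e => c * ρ e) = k * En ρ)
    (hN : ∀ γ e, 0 ≤ N γ e) (hadm : ∃ ρ, IsAdmissible N ρ) (hc : 0 < c)
    (hw : ∀ γ e, N γ e ≠ 0 → 1 ≤ w γ e ∧ w γ e ≤ c) :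
    modulus N En / k ≤ modulus (fun γ e => w γ e * N γ e) En ∧
      modulus (fun γ e => w γ e * N γ e) En ≤ modulus N En := by
  have hlow : ∀ γ e, N γ e ≤ w γ e * N γ e := fun γ e => by
    rcases eq_or_ne (N γ e) 0 with h | h
    · simp [h]
    · exact le_mul_of_one_le_left (hN γ e) (hw γ e h).1
  have hup : ∀ γ e, w γ e * N γ e ≤ c * N γ e := fun γ e => by
    rcases eq_or_ne (N γ e) 0 with h | h
    · simp [h]
    · exact mul_le_mul_of_nonneg_right (hw γ e h).2 (hN γ e)
  obtain ⟨ρ, hρ⟩ := hadm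
  refine ⟨?_, modulus_anti hEn_nonneg hlow ⟨ρ, hρ⟩⟩
  rw [← modulus_const_mul hc hk hEn_const_mul]
  exact modulus_anti hEn_nonneg hup ⟨ρ, hρ.mono hlow⟩

end Modulus

section Energy

variable {E : Type*} [Fintype E] {σ ρ : E → ℝ}

theorem pEnergy_nonneg (hσ : ∀ e, 0 ≤ σ e) (p : ℝ) (hρ : ∀ e, 0 ≤ ρ e) :
    0 ≤ pEnergy σ p ρ :=
  sum_nonneg fun e _ => mul_nonneg (hσ e) (Real.rpow_nonneg (hρ e) p)

theorem pEnergy_const_mul {c : ℝ} (hc : 0 ≤ c) (p : ℝ) (hρ : ∀ e, 0 ≤ ρ e) :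
    pEnergy σ p (fun e => c * ρ e) = c ^ p * pEnergy σ p ρ := by
  rw [pEnergy, pEnergy, mul_sum]
  refine sum_congr rfl fun e _ => ?_
  rw [Real.mul_rpow hc (hρ e)]
  ring

variable [Nonempty E]

theorem infEnergy_nonneg (hσ : ∀ e, 0 ≤ σ e) (hρ : ∀ e, 0 ≤ ρ e) : 0 ≤ infEnergy σ ρ :=
  (mul_nonneg (hσ (Classical.arbitrary E)) (hρ _)).trans
    (le_sup' (fun e => σ e * ρ e) (mem_univ _))

theorem infEnergy_const_mul {c : ℝ} (hc : 0 ≤ c) :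
    infEnergy σ (fun e => c * ρ e) = c * infEnergy σ ρ := by
  rw [infEnergy, infEnergy, mul₀_sup' hc]
  simp only [mul_left_comm]

end Energy

theorem temporal_scaling_bounds_general
    {E Γ : Type*} [Fintype E] [Nonempty E]
    (Nch : Γ → E → ℝ) (hN01 : ∀ γ e, Nch γ e = 0 ∨ Nch γ e = 1)
    (hrow : ∀ γ, ∃ e, Nch γ e = 1)
    (t : Γ → E → ℝ) (ht : ∀ γ e, Nch γ e = 1 → 0 < t γ e)
    (φ : ℝ → ℝ) (hφ0 : φ 0 = 1) (hφmono : MonotoneOn φ (Set.Ici 0))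
    (σ : E → ℝ) (hσ : ∀ e, 0 < σ e)
    (lam : ℝ) (hlam : 0 < lam)
    (M : ℝ) (hM : IsGreatest {x | ∃ γ e, Nch γ e = 1 ∧ x = t γ e} M)
    (p : ℝ) :
    (pModulus Nch σ p / φ (lam * M) ^ p ≤
        pModulus (fun γ e => φ (lam * t γ e) * Nch γ e) σ p ∧
      pModulus (fun γ e => φ (lam * t γ e) * Nch γ e) σ p ≤ pModulus Nch σ p) ∧
    (infModulus Nch σ / φ (lam * M) ≤
        infModulus (fun γ e => φ (lam * t γ e) * Nch γ e) σ ∧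
      infModulus (fun γ e => φ (lam * t γ e) * Nch γ e) σ ≤ infModulus Nch σ) := by
  have hN : ∀ γ e, 0 ≤ Nch γ e := fun γ e => by rcases hN01 γ e with h | h <;> simp [h]
  have hadm := exists_isAdmissible hN fun γ => (hrow γ).imp fun _ h => h.ge
  have hw : ∀ γ e, Nch γ e ≠ 0 → 1 ≤ φ (lam * t γ e) ∧ φ (lam * t γ e) ≤ φ (lam * M) := by
    intro γ e hγe
    have hsupp := (hN01 γ e).resolve_left hγe
    have htpos : 0 ≤ lam * t γ e := (mul_pos hlam (ht γ e hsupp)).le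
    have htM : lam * t γ e ≤ lam * M := by gcongr; exact hM.2 ⟨γ, e, hsupp, rfl⟩
    exact ⟨hφ0 ▸ hφmono (Set.mem_Ici.2 le_rfl) htpos htpos, hφmono htpos (htpos.trans htM) htM⟩
  have hc : 0 < φ (lam * M) := by
    obtain ⟨γ, e, hsupp, rfl⟩ := hM.1
    exact one_pos.trans_le (hw γ e (by simp [hsupp])).1
  have hσ' : ∀ e, 0 ≤ σ e := fun e => (hσ e).le
  exact ⟨modulus_weighted_bounds (Real.rpow_pos_of_pos hc p) (fun _ => pEnergy_nonneg hσ' p)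
      (fun _ => pEnergy_const_mul hc.le p) hN hadm hc hw,
    modulus_weighted_bounds hc (fun _ => infEnergy_nonneg hσ')
      (fun _ _ => infEnergy_const_mul hc.le) hN hadm hc hw⟩

/-- temporal scaling bounds: with the λ-penalized usage matrix
`N_λ(γ,e) = φ(λ t(γ,e)) Ň(γ,e)` and `M` the largest availability time,
`Mod_{p,σ}(Γ̌)/φ(λM)^p ≤ Mod^λ_{p,σ}(Γ) ≤ Mod_{p,σ}(Γ̌)` for `p ∈ [1,∞)`, and
`Mod_{∞,σ}(Γ̌)/φ(λM) ≤ Mod^λ_{∞,σ}(Γ) ≤ Mod_{∞,σ}(Γ̌)`. -/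
theorem temporal_scaling_bounds
    {E Γ : Type*} [Fintype E] [Fintype Γ] [Nonempty E] [Nonempty Γ]
    (Nch : Γ → E → ℝ) (hN01 : ∀ γ e, Nch γ e = 0 ∨ Nch γ e = 1)
    (hrow : ∀ γ, ∃ e, Nch γ e = 1)
    (t : Γ → E → ℝ) (ht : ∀ γ e, Nch γ e = 1 → 0 < t γ e)
    (φ : ℝ → ℝ) (hφ0 : φ 0 = 1) (hφmono : MonotoneOn φ (Set.Ici 0))
    (σ : E → ℝ) (hσ : ∀ e, 0 < σ e)
    (lam : ℝ) (hlam : 0 < lam)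
    (M : ℝ) (hM : IsGreatest {x | ∃ γ e, Nch γ e = 1 ∧ x = t γ e} M)
    (p : ℝ) (hp : 1 ≤ p) :
    (pModulus Nch σ p / φ (lam * M) ^ p ≤
        pModulus (fun γ e => φ (lam * t γ e) * Nch γ e) σ p ∧
      pModulus (fun γ e => φ (lam * t γ e) * Nch γ e) σ p ≤ pModulus Nch σ p) ∧
    (infModulus Nch σ / φ (lam * M) ≤
        infModulus (fun γ e => φ (lam * t γ e) * Nch γ e) σ ∧
      infModulus (fun γ e => φ (lam * t γ e) * Nch γ e) σ ≤ infModulus Nch σ) :=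
  temporal_scaling_bounds_general Nch hN01 hrow t ht φ hφ0 hφmono σ hσ lam hlam M hM p
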